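/- arXiv:1109.6761 — 3 statements merged into one kernel-verified Lean document; each statement's English description precedes it below -/
import Mathlib

section
/- Let G be a connected distance-regular graph on a finite set Y, let Z be a finite set with |Y| ≤ |Z|, let ε > 0, and let H be a channel matrix from Y to Z satisfying ε-differential privacy with respect to G. Fix any vertex y₀ ∈ Y and, for each d from 0 to the diameter of G, let n_d be the number of vertices of G at graph distance d from y₀. Then, under the uniform prior p(y) = 1/|Y|, every guess function g : Z → Y satisfies U(g) ≤ 1 / Σ_d n_d · e^{−ε·d}. -/
open Finset

/-- The diameter of a graph on a finite vertex set. -/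
noncomputable def graphDiam {Y : Type*} [Fintype Y] (G : SimpleGraph Y) : ℕ :=
  Finset.univ.sup fun p : Y × Y => G.dist p.1 p.2

/-- The number of vertices at graph distance `d` from `r`. -/
noncomputable def nAtDist {Y : Type*} [Fintype Y] (G : SimpleGraph Y) (r : Y) (d : ℕ) : ℕ :=
  (Finset.univ.filter fun a => G.dist r a = d).card

/-- `∑ d from 0 to diam, n_d · e^{-ε d}`. -/
noncomputable def expDistSum {Y : Type*} [Fintype Y] (G : SimpleGraph Y) (ε : ℝ) (r : Y) : ℝ :=
  ∑ d ∈ Finset.range (graphDiam G + 1), (nAtDist G r d : ℝ) * Real.exp (-(ε * d))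

/-- `ε`-differential privacy of a channel matrix with respect to a graph. -/
def SatisfiesDP {Y Z : Type*} (G : SimpleGraph Y) (ε : ℝ) (H : Y → Z → ℝ) : Prop :=
  ∀ (z : Z) (y y' : Y), G.Adj y y' → H y z ≤ Real.exp ε * H y' z

/-- Distance-regularity. -/
def IsDistanceRegular {Y : Type*} [Fintype Y] (G : SimpleGraph Y) [DecidableRel G.Adj] : Prop :=
  ∃ c b : ℕ → ℕ, ∀ x y : Y,
    (Finset.univ.filter fun w => G.Adj y w ∧ G.dist x w + 1 = G.dist x y).card
      = c (G.dist x y) ∧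
    (Finset.univ.filter fun w => G.Adj y w ∧ G.dist x w = G.dist x y + 1).card
      = b (G.dist x y)

private lemma walk_bound {Y Z : Type*} {G : SimpleGraph Y} {ε : ℝ} {H : Y → Z → ℝ}
    (hdp : SatisfiesDP G ε H) (z : Z) :
    ∀ {y y' : Y} (w : G.Walk y y'), H y z ≤ Real.exp (ε * w.length) * H y' z := by
  intro y y' w
  induction w with
  | nil => simp
  | @cons a b c' h p ih =>
    calc H a z ≤ Real.exp ε * H b z := hdp z a b h
      _ ≤ Real.exp ε * (Real.exp (ε * p.length) * H c' z) :=
          mul_le_mul_of_nonneg_left ih (Real.exp_pos ε).le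
      _ = Real.exp (ε * (p.cons h).length) * H c' z := by
          rw [← mul_assoc, ← Real.exp_add, SimpleGraph.Walk.length_cons]
          congr 2
          push_cast
          ring

private lemma dist_bound {Y Z : Type*} {G : SimpleGraph Y} {ε : ℝ} {H : Y → Z → ℝ}
    (hconn : G.Connected) (hdp : SatisfiesDP G ε H) (z : Z) (y y' : Y) :
    H y z ≤ Real.exp (ε * G.dist y y') * H y' z := by
  obtain ⟨w, hw⟩ := hconn.exists_walk_length_eq_dist y y'
  have := walk_bound hdp z w
  rwa [hw] at this

private lemma nAtDist_eq {Y : Type*} [Fintype Y] {G : SimpleGraph Y} [DecidableRel G.Adj]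
    (hconn : G.Connected) (hDR : IsDistanceRegular G) (d : ℕ) (x y : Y) :
    nAtDist G x d = nAtDist G y d := by
  classical
  obtain ⟨c, b, hcb⟩ := hDR
  -- c (d+1) is positive whenever some vertex is at distance d+1 from some root
  have hc : ∀ (v w : Y) (d : ℕ), G.dist v w = d + 1 → 0 < c (d + 1) := by
    intro v w d hw
    obtain ⟨q, hq⟩ := hconn.exists_walk_length_eq_dist w v
    rw [SimpleGraph.dist_comm, hw] at hq
    cases q with
    | nil => simp at hq
    | @cons _ u _ h q' =>
      have hlen : q'.length = d := by simpa using hq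
      have hle : G.dist v u ≤ d := by
        rw [SimpleGraph.dist_comm]
        have := SimpleGraph.dist_le q'
        omega
      have hge : d ≤ G.dist v u := by
        have t := hconn.dist_triangle (u := v) (v := u) (w := w)
        have h1 : G.dist u w ≤ 1 := by
          have := SimpleGraph.dist_le h.symm.toWalk
          simpa using this
        omega
      have hu : G.dist v u = d := le_antisymm hle hge
      have hmem : u ∈ Finset.univ.filter
          fun t => G.Adj w t ∧ G.dist v t + 1 = d + 1 := by
        simp [h, hu]
      have := (hcb v w).1
      rw [hw] at this
      rw [← this]
      exact Finset.card_pos.mpr ⟨u, hmem⟩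
  -- double counting between consecutive spheres
  have count : ∀ (v : Y) (d : ℕ),
      nAtDist G v d * b d = nAtDist G v (d + 1) * c (d + 1) := by
    intro v d
    have swap :
        (∑ u ∈ Finset.univ.filter (fun u => G.dist v u = d),
          (Finset.univ.filter fun w => G.Adj u w ∧ G.dist v w = G.dist v u + 1).card)
        = ∑ w ∈ Finset.univ.filter (fun w => G.dist v w = d + 1),
          (Finset.univ.filter fun u => G.Adj w u ∧ G.dist v u + 1 = G.dist v w).card := by
      rw [Finset.sum_filter, Finset.sum_filter]
      have L : ∀ u : Y,
          (if G.dist v u = d then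
            (Finset.univ.filter fun w => G.Adj u w ∧ G.dist v w = G.dist v u + 1).card else 0)
          = ∑ w : Y, if G.dist v u = d ∧ G.Adj u w ∧ G.dist v w = d + 1 then 1 else 0 := by
        intro u
        split
        · next h =>
            rw [Finset.card_filter]
            exact Finset.sum_congr rfl fun w _ => if_congr (by rw [h]; simp) rfl rfl
        · next h => simp [h]
      have R : ∀ w : Y,
          (if G.dist v w = d + 1 then
            (Finset.univ.filter fun u => G.Adj w u ∧ G.dist v u + 1 = G.dist v w).card else 0)
          = ∑ u : Y, if G.dist v u = d ∧ G.Adj u w ∧ G.dist v w = d + 1 then 1 else 0 := by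
        intro w
        split
        · next h =>
          rw [Finset.card_filter]
          apply Finset.sum_congr rfl
          intro u _
          apply if_congr _ rfl rfl
          constructor
          · rintro ⟨h1, h2⟩
            exact ⟨by omega, h1.symm, h⟩
          · rintro ⟨h1, h2, _⟩
            exact ⟨h2.symm, by omega⟩
        · next h =>
          rw [Finset.sum_eq_zero]
          intro u _
          simp only [ite_eq_right_iff]
          rintro ⟨_, _, h3⟩
          exact absurd h3 h
      rw [Finset.sum_congr rfl fun u _ => L u, Finset.sum_congr rfl fun w _ => R w,
        Finset.sum_comm]
    have e1 : ∀ u ∈ Finset.univ.filter (fun u => G.dist v u = d),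
        (Finset.univ.filter fun w => G.Adj u w ∧ G.dist v w = G.dist v u + 1).card = b d := by
      intro u hu
      rw [(hcb v u).2, (Finset.mem_filter.mp hu).2]
    have e2 : ∀ w ∈ Finset.univ.filter (fun w => G.dist v w = d + 1),
        (Finset.univ.filter fun u => G.Adj w u ∧ G.dist v u + 1 = G.dist v w).card
          = c (d + 1) := by
      intro w hw
      rw [(hcb v w).1, (Finset.mem_filter.mp hw).2]
    calc nAtDist G v d * b d
        = ∑ _u ∈ Finset.univ.filter (fun u => G.dist v u = d), b d := by
          rw [Finset.sum_const, smul_eq_mul]; rfl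
      _ = ∑ u ∈ Finset.univ.filter (fun u => G.dist v u = d),
            (Finset.univ.filter fun w => G.Adj u w ∧ G.dist v w = G.dist v u + 1).card :=
          (Finset.sum_congr rfl e1).symm
      _ = ∑ w ∈ Finset.univ.filter (fun w => G.dist v w = d + 1),
            (Finset.univ.filter fun u => G.Adj w u ∧ G.dist v u + 1 = G.dist v w).card := swap
      _ = ∑ _w ∈ Finset.univ.filter (fun w => G.dist v w = d + 1), c (d + 1) :=
          Finset.sum_congr rfl e2
      _ = nAtDist G v (d + 1) * c (d + 1) := by
          rw [Finset.sum_const, smul_eq_mul]; rfl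
  induction d with
  | zero =>
    have h0 : ∀ v : Y, nAtDist G v 0 = 1 := by
      intro v
      unfold nAtDist
      have : (Finset.univ.filter fun a => G.dist v a = 0) = {v} := by
        ext a
        simp [hconn.dist_eq_zero_iff, eq_comm]
      rw [this, Finset.card_singleton]
    rw [h0, h0]
  | succ d ih =>
    rcases Nat.eq_zero_or_pos (c (d + 1)) with h0 | hpos
    · have zz : ∀ v : Y, nAtDist G v (d + 1) = 0 := by
        intro v
        by_contra hne
        obtain ⟨w, hw⟩ := Finset.card_pos.mp (Nat.pos_of_ne_zero hne)
        have hw' := (Finset.mem_filter.mp hw).2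
        have := hc v w d hw'
        omega
      rw [zz, zz]
    · have h1 : nAtDist G x (d + 1) * c (d + 1) = nAtDist G y (d + 1) * c (d + 1) := by
        rw [← count x d, ← count y d, ih]
      exact Nat.eq_of_mul_eq_mul_right hpos h1

private lemma expDistSum_eq_sum {Y : Type*} [Fintype Y] (G : SimpleGraph Y) (ε : ℝ) (v : Y) :
    expDistSum G ε v = ∑ y : Y, Real.exp (-(ε * G.dist v y)) := by
  unfold expDistSum nAtDist
  rw [← Finset.sum_fiberwise_of_maps_to
    (g := fun y => G.dist v y) (t := Finset.range (graphDiam G + 1))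
    (fun y _ => Finset.mem_range.mpr (Nat.lt_succ_of_le
      (Finset.le_sup (f := fun p : Y × Y => G.dist p.1 p.2) (Finset.mem_univ (v, y)))))
    (fun y => Real.exp (-(ε * G.dist v y)))]
  apply Finset.sum_congr rfl
  intro d _
  rw [Finset.sum_congr rfl (fun y hy => by rw [(Finset.mem_filter.mp hy).2]),
    Finset.sum_const, nsmul_eq_mul]

theorem stmt2 {Y Z : Type*} [Fintype Y] [Nonempty Y] [Fintype Z]
    (G : SimpleGraph Y) [DecidableRel G.Adj]
    (hconn : G.Connected) (hDR : IsDistanceRegular G)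
    (hcard : Fintype.card Y ≤ Fintype.card Z)
    (ε : ℝ) (hε : 0 < ε)
    (H : Y → Z → ℝ)
    (hH0 : ∀ y z, 0 ≤ H y z)
    (hH1 : ∀ y, ∑ z, H y z = 1)
    (hdp : SatisfiesDP G ε H)
    (y₀ : Y)
    (g : Z → Y) :
    ∑ z, (1 / (Fintype.card Y : ℝ)) * H (g z) z ≤ 1 / expDistSum G ε y₀ := by
  set S := expDistSum G ε y₀ with hS
  have hSv : ∀ v : Y, expDistSum G ε v = S := by
    intro v
    rw [hS]
    unfold expDistSum
    exact Finset.sum_congr rfl fun d _ => by rw [nAtDist_eq hconn hDR d v y₀]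
  have hn0 : 0 < nAtDist G y₀ 0 :=
    Finset.card_pos.mpr ⟨y₀, Finset.mem_filter.mpr ⟨Finset.mem_univ _, by simp⟩⟩
  have hSpos : 0 < S := by
    rw [hS]
    unfold expDistSum
    apply Finset.sum_pos' (fun d _ => by positivity)
    refine ⟨0, Finset.mem_range.mpr (Nat.succ_pos _), ?_⟩
    have : (0:ℝ) < (nAtDist G y₀ 0 : ℝ) := by exact_mod_cast hn0
    positivity
  have hz : ∀ z : Z, S * H (g z) z ≤ ∑ y : Y, H y z := by
    intro z
    rw [← hSv (g z), expDistSum_eq_sum G ε (g z), Finset.sum_mul]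
    apply Finset.sum_le_sum
    intro y _
    have hb := dist_bound hconn hdp z (g z) y
    calc Real.exp (-(ε * G.dist (g z) y)) * H (g z) z
        ≤ Real.exp (-(ε * G.dist (g z) y)) * (Real.exp (ε * G.dist (g z) y) * H y z) :=
          mul_le_mul_of_nonneg_left hb (Real.exp_pos _).le
      _ = H y z := by rw [← mul_assoc, ← Real.exp_add]; simp
  have total : S * ∑ z, H (g z) z ≤ (Fintype.card Y : ℝ) := by
    rw [Finset.mul_sum]
    calc ∑ z, S * H (g z) z ≤ ∑ z : Z, ∑ y : Y, H y z :=
          Finset.sum_le_sum fun z _ => hz z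
      _ = ∑ y : Y, ∑ z : Z, H y z := Finset.sum_comm
      _ = (Fintype.card Y : ℝ) := by simp [hH1]
  have hYpos : (0:ℝ) < (Fintype.card Y : ℝ) := by
    exact_mod_cast Fintype.card_pos
  rw [show ∑ z, (1 / (Fintype.card Y : ℝ)) * H (g z) z
      = (∑ z, H (g z) z) / (Fintype.card Y : ℝ) by rw [← Finset.mul_sum]; ring]
  rw [div_le_div_iff₀ hYpos hSpos]
  nlinarith [total]
end

section
/- Let G be a connected VT⁺ graph on a finite set Y, let Z be a finite set with |Y| ≤ |Z|, let ε > 0, and let H be a channel matrix from Y to Z satisfying ε-differential privacy with respect to G. Fix any vertex y₀ ∈ Y and, for each d from 0 to the diameter of G, let n_d be the number of vertices of G at graph distance d from y₀. Then, under the uniform prior p(y) = 1/|Y|, every guess function g : Z → Y satisfies U(g) ≤ 1 / Σ_d n_d · e^{−ε·d}. -/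
/-!
Differential privacy along a shortest path gives `e^{-ε d(y, y')} H(y, z) ≤ H(y', z)`.
Summing over `y'` and using that, by vertex transitivity, `∑_{y'} e^{-ε d(y, y')}` is the same
number `S = ∑_d n_d e^{-ε d}` for every `y`, each guessed entry satisfies
`S · H(g z, z) ≤ ∑_{y'} H(y', z)`; summing over `z` bounds `S · ∑_z H(g z, z)` by `|Y|`.
-/

open Finset

/-- VT⁺ graphs. -/
def IsVTPlus {Y : Type*} [Fintype Y] (G : SimpleGraph Y) : Prop :=
  ∃ σ : Fin (Fintype.card Y) → (G ≃g G), ∀ y y' : Y, ∃ i, σ i y = y'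

namespace SimpleGraph

variable {V V' : Type*} {G : SimpleGraph V} {G' : SimpleGraph V'}

lemma dist_map_le (f : G →g G') {u v : V} (h : G.Reachable u v) :
    G'.dist (f u) (f v) ≤ G.dist u v := by
  obtain ⟨p, hp⟩ := h.exists_walk_length_eq_dist
  simpa [hp] using dist_le (p.map f)

lemma Iso.dist_eq (φ : G ≃g G') (u v : V) : G'.dist (φ u) (φ v) = G.dist u v := by
  by_cases h : G.Reachable u v
  · refine le_antisymm (dist_map_le φ.toHom h) ?_
    simpa using dist_map_le φ.symm.toHom (Iso.reachable_iff.2 h : G'.Reachable (φ u) (φ v))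
  · rw [dist_eq_zero_of_not_reachable h, dist_eq_zero_of_not_reachable (mt Iso.reachable_iff.1 h)]

end SimpleGraph

section Spheres

variable {Y : Type*} [Fintype Y] {G : SimpleGraph Y}

lemma nAtDist_iso_apply (φ : G ≃g G) (r : Y) (d : ℕ) :
    nAtDist G (φ r) d = nAtDist G r d := by
  refine card_equiv φ.symm.toEquiv fun a => ?_
  simp only [mem_filter, mem_univ, true_and, RelIso.coe_fn_toEquiv]
  rw [← φ.dist_eq r (φ.symm a), RelIso.apply_symm_apply]

lemma IsVTPlus.nAtDist_eq (hVT : IsVTPlus G) (r r' : Y) (d : ℕ) :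
    nAtDist G r d = nAtDist G r' d := by
  obtain ⟨σ, hσ⟩ := hVT
  obtain ⟨i, rfl⟩ := hσ r' r
  exact nAtDist_iso_apply (σ i) r' d

lemma IsVTPlus.expDistSum_eq (hVT : IsVTPlus G) (ε : ℝ) (r r' : Y) :
    expDistSum G ε r = expDistSum G ε r' := by
  simp only [expDistSum, hVT.nAtDist_eq r r']

lemma expDistSum_eq_sum_exp (G : SimpleGraph Y) (ε : ℝ) (r : Y) :
    expDistSum G ε r = ∑ y, Real.exp (-(ε * G.dist r y)) := by
  have hdist_le : ∀ y ∈ univ, G.dist r y ∈ range (graphDiam G + 1) := fun y _ =>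
    mem_range_succ_iff.2 <| le_sup (f := fun p : Y × Y => G.dist p.1 p.2) (mem_univ (r, y))
  rw [← sum_fiberwise_of_maps_to hdist_le, expDistSum]
  refine sum_congr rfl fun d _ => ?_
  rw [sum_congr rfl fun y hy => by rw [(mem_filter.1 hy).2], sum_const, nsmul_eq_mul]
  rfl

lemma expDistSum_pos (G : SimpleGraph Y) (ε : ℝ) (r : Y) : 0 < expDistSum G ε r := by
  rw [expDistSum_eq_sum_exp]
  exact sum_pos (fun y _ => Real.exp_pos _) ⟨r, mem_univ r⟩

end Spheres

namespace SatisfiesDP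

variable {Y Z : Type*} {G : SimpleGraph Y} {ε : ℝ} {H : Y → Z → ℝ}

lemma le_exp_mul_length (hdp : SatisfiesDP G ε H) (z : Z) {u v : Y} (p : G.Walk u v) :
    H u z ≤ Real.exp (ε * p.length) * H v z := by
  induction p with
  | nil => simp
  | @cons a b c hab q ih =>
    calc H a z ≤ Real.exp ε * H b z := hdp z a b hab
      _ ≤ Real.exp ε * (Real.exp (ε * q.length) * H c z) := by gcongr
      _ = Real.exp (ε * (q.cons hab).length) * H c z := by
          rw [← mul_assoc, ← Real.exp_add, SimpleGraph.Walk.length_cons]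
          push_cast
          ring_nf

lemma exp_neg_mul_dist_mul_le (hdp : SatisfiesDP G ε H) (z : Z) {u v : Y}
    (huv : G.Reachable u v) : Real.exp (-(ε * G.dist u v)) * H u z ≤ H v z := by
  obtain ⟨p, hp⟩ := huv.exists_walk_length_eq_dist
  have hle := hp ▸ hdp.le_exp_mul_length z p
  calc Real.exp (-(ε * G.dist u v)) * H u z
      ≤ Real.exp (-(ε * G.dist u v)) * (Real.exp (ε * G.dist u v) * H v z) := by gcongr
    _ = H v z := by rw [← mul_assoc, ← Real.exp_add, neg_add_cancel, Real.exp_zero, one_mul]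

lemma sum_guess_mul_expDistSum_le [Fintype Y] [Fintype Z] (hdp : SatisfiesDP G ε H)
    (hconn : G.Connected) (hVT : IsVTPlus G) (hH1 : ∀ y, ∑ z, H y z = 1) (g : Z → Y) (r : Y) :
    (∑ z, H (g z) z) * expDistSum G ε r ≤ Fintype.card Y :=
  calc (∑ z, H (g z) z) * expDistSum G ε r
      = ∑ z, ∑ y, Real.exp (-(ε * G.dist (g z) y)) * H (g z) z := by
        rw [sum_mul]
        refine sum_congr rfl fun z _ => ?_
        rw [hVT.expDistSum_eq ε r (g z), expDistSum_eq_sum_exp, mul_sum]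
        exact sum_congr rfl fun y _ => mul_comm _ _
    _ ≤ ∑ z, ∑ y, H y z :=
        sum_le_sum fun z _ => sum_le_sum fun y _ => hdp.exp_neg_mul_dist_mul_le z (hconn _ _)
    _ = Fintype.card Y := by simp [sum_comm (f := fun z y => H y z), hH1]

end SatisfiesDP

theorem stmt3_general {Y Z : Type*} [Fintype Y] [Fintype Z]
    (G : SimpleGraph Y)
    (hconn : G.Connected) (hVT : IsVTPlus G)
    (ε : ℝ)
    (H : Y → Z → ℝ)
    (hH1 : ∀ y, ∑ z, H y z = 1)
    (hdp : SatisfiesDP G ε H)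
    (y₀ : Y)
    (g : Z → Y) :
    ∑ z, (1 / (Fintype.card Y : ℝ)) * H (g z) z ≤ 1 / expDistSum G ε y₀ := by
  have hY : (0 : ℝ) < Fintype.card Y := Nat.cast_pos.2 (Fintype.card_pos_iff.2 ⟨y₀⟩)
  have hS := expDistSum_pos G ε y₀
  rw [← mul_sum, div_mul_eq_mul_div, one_mul, div_le_div_iff₀ hY hS, one_mul]
  exact hdp.sum_guess_mul_expDistSum_le hconn hVT hH1 g y₀

theorem stmt3 {Y Z : Type*} [Fintype Y] [Nonempty Y] [Fintype Z]
    (G : SimpleGraph Y)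
    (hconn : G.Connected) (hVT : IsVTPlus G)
    (hcard : Fintype.card Y ≤ Fintype.card Z)
    (ε : ℝ) (hε : 0 < ε)
    (H : Y → Z → ℝ)
    (hH0 : ∀ y z, 0 ≤ H y z)
    (hH1 : ∀ y, ∑ z, H y z = 1)
    (hdp : SatisfiesDP G ε H)
    (y₀ : Y)
    (g : Z → Y) :
    ∑ z, (1 / (Fintype.card Y : ℝ)) * H (g z) z ≤ 1 / expDistSum G ε y₀ :=
  stmt3_general G hconn hVT ε H hH1 hdp y₀ g
end

section
/- Let G be a connected distance-regular graph on a finite set Y and let ε > 0. Fix a vertex y₀ ∈ Y, for each d from 0 to the diameter of G let n_d be the number of vertices at graph distance d from y₀, and set c = 1 / Σ_d n_d · e^{−ε·d}. Define H : Y → Y → ℝ by H(y,y') = c · e^{−ε·d(y,y')}, where d(y,y') is graph distance in G. Then H is a channel matrix from Y to Y (every row is nonnegative and sums to 1), H satisfies ε-differential privacy with respect to G, and under the uniform prior on Y the maximal utility over all guess functions g : Y → Y equals c, attained by the identity guess. -/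
open Finset

section Aux

variable {Y : Type*} [Fintype Y] (G : SimpleGraph Y) [DecidableRel G.Adj]

lemma nAtDist_zero (hconn : G.Connected) (r : Y) : nAtDist G r 0 = 1 := by
  classical
  have : (Finset.univ.filter fun a => G.dist r a = 0) = {r} := by
    ext a
    simp [hconn.dist_eq_zero_iff, eq_comm]
  rw [nAtDist, this, Finset.card_singleton]

lemma exists_pred (hconn : G.Connected) (r w : Y) (h : G.dist r w ≠ 0) :
    ∃ u, G.Adj w u ∧ G.dist r u + 1 = G.dist r w := by
  obtain ⟨p, hp⟩ := hconn.exists_walk_length_eq_dist r w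
  have hne : w ≠ r := fun hwr => h (by rw [hwr, SimpleGraph.dist_self])
  obtain ⟨u, hadj, q, hq⟩ := SimpleGraph.Walk.exists_eq_cons_of_ne hne p.reverse
  have hlen : q.length + 1 = G.dist r w := by
    have := congrArg SimpleGraph.Walk.length hq
    simpa [SimpleGraph.Walk.length_reverse, hp] using this.symm
  have h1 : G.dist r u ≤ q.length := by
    rw [SimpleGraph.dist_comm]
    exact SimpleGraph.dist_le q
  have h2 : G.dist r w ≤ G.dist r u + 1 := by
    have ht := hconn.dist_triangle (u := r) (v := u) (w := w)
    have : G.dist u w = 1 := SimpleGraph.dist_eq_one_iff_adj.mpr hadj.symm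
    omega
  exact ⟨u, hadj, by omega⟩

lemma key_count (b c : ℕ → ℕ)
    (hDR : ∀ x y : Y,
      (Finset.univ.filter fun w => G.Adj y w ∧ G.dist x w + 1 = G.dist x y).card
        = c (G.dist x y) ∧
      (Finset.univ.filter fun w => G.Adj y w ∧ G.dist x w = G.dist x y + 1).card
        = b (G.dist x y))
    (r : Y) (d : ℕ) :
    nAtDist G r d * b d = nAtDist G r (d + 1) * c (d + 1) := by
  classical
  set P : Y → Y → Prop := fun y w => G.dist r y = d ∧ G.Adj y w ∧ G.dist r w = d + 1 with hP
  have hdec : ∀ y w, Decidable (P y w) := fun y w => by rw [hP]; infer_instance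
  have h1 : (∑ y : Y, ∑ w : Y, if P y w then 1 else 0)
      = nAtDist G r d * b d := by
    rw [nAtDist, Finset.card_filter, Finset.sum_mul]
    refine Finset.sum_congr rfl fun y _ => ?_
    by_cases hy : G.dist r y = d
    · have hb := (hDR r y).2
      simp only [hy] at hb
      simp only [hP, hy, true_and, if_pos, ← Finset.card_filter, hb, if_true, one_mul]
    · simp [hP, hy]
  have h2 : (∑ y : Y, ∑ w : Y, if P y w then 1 else 0)
      = nAtDist G r (d + 1) * c (d + 1) := by
    rw [Finset.sum_comm, nAtDist, Finset.card_filter, Finset.sum_mul]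
    refine Finset.sum_congr rfl fun w _ => ?_
    by_cases hw : G.dist r w = d + 1
    · have hcc := (hDR r w).1
      simp only [hw] at hcc
      rw [← hcc, Finset.card_filter, if_pos hw, one_mul]
      refine Finset.sum_congr rfl fun y _ => if_congr ?_ rfl rfl
      constructor
      · rintro ⟨h1, h2, _⟩; exact ⟨h2.symm, by omega⟩
      · rintro ⟨h1, h2⟩; exact ⟨by omega, h1.symm, hw⟩
    · rw [if_neg hw, zero_mul]
      exact Finset.sum_eq_zero fun y _ => by simp [hP, hw]
  omega

lemma nAtDist_indep (hconn : G.Connected) (hDR : IsDistanceRegular G) :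
    ∀ (d : ℕ) (r r' : Y), nAtDist G r d = nAtDist G r' d := by
  obtain ⟨c, b, hDR⟩ := hDR
  intro d
  induction d with
  | zero => intro r r'; rw [nAtDist_zero G hconn, nAtDist_zero G hconn]
  | succ d ih =>
    intro r r'
    have k1 := key_count G b c hDR r d
    have k2 := key_count G b c hDR r' d
    rcases Nat.eq_zero_or_pos (c (d + 1)) with hc0 | hcpos
    · -- show both sides are zero
      have hz : ∀ s : Y, nAtDist G s (d + 1) = 0 := by
        intro s
        rw [nAtDist, Finset.card_eq_zero, Finset.filter_eq_empty_iff]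
        intro w _
        intro hw
        obtain ⟨u, hadj, hu⟩ := exists_pred G hconn s w (by omega)
        have hcc := (hDR s w).1
        rw [hw, hc0, Finset.card_eq_zero, Finset.filter_eq_empty_iff] at hcc
        exact hcc (Finset.mem_univ u) ⟨hadj, by omega⟩
      rw [hz r, hz r']
    · have := ih r r'
      have : nAtDist G r (d + 1) * c (d + 1) = nAtDist G r' (d + 1) * c (d + 1) := by
        rw [← k1, ← k2, this]
      exact Nat.eq_of_mul_eq_mul_right hcpos this

lemma row_sum (ε : ℝ) (y : Y) :
    ∑ y' : Y, Real.exp (-(ε * G.dist y y')) = expDistSum G ε y := by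
  classical
  rw [expDistSum,
    ← Finset.sum_fiberwise_of_maps_to (g := fun y' => G.dist y y')
      (t := Finset.range (graphDiam G + 1))
      (fun y' _ => Finset.mem_range.mpr (Nat.lt_succ_of_le
        (Finset.le_sup (f := fun p : Y × Y => G.dist p.1 p.2) (Finset.mem_univ (y, y')))))]
  refine Finset.sum_congr rfl fun d _ => ?_
  rw [Finset.sum_congr rfl (fun x hx => by
    rw [(Finset.mem_filter.mp hx).2]), Finset.sum_const, nAtDist, nsmul_eq_mul]

end Aux

theorem stmt4 {Y : Type*} [Fintype Y] [Nonempty Y]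
    (G : SimpleGraph Y) [DecidableRel G.Adj]
    (hconn : G.Connected) (hDR : IsDistanceRegular G)
    (ε : ℝ) (hε : 0 < ε)
    (y₀ : Y) (c : ℝ) (hc : c = 1 / expDistSum G ε y₀)
    (H : Y → Y → ℝ)
    (hH : ∀ y y' : Y, H y y' = c * Real.exp (-(ε * G.dist y y'))) :
    (∀ y y' : Y, 0 ≤ H y y') ∧
    (∀ y : Y, ∑ y', H y y' = 1) ∧
    SatisfiesDP G ε H ∧
    (∀ g : Y → Y, ∑ z, (1 / (Fintype.card Y : ℝ)) * H (g z) z ≤ c) ∧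
    (∑ z, (1 / (Fintype.card Y : ℝ)) * H z z = c) := by
  classical
  -- positivity of the normalizing sum
  have hSpos : 0 < expDistSum G ε y₀ := by
    rw [expDistSum]
    refine Finset.sum_pos' (fun d _ => by positivity) ⟨0, Finset.mem_range.mpr (Nat.succ_pos _), ?_⟩
    rw [nAtDist_zero G hconn]
    simp [Real.exp_pos]
  have hcpos : 0 < c := by rw [hc]; positivity
  have hcS : c * expDistSum G ε y₀ = 1 := by
    rw [hc]; field_simp
  have hHle : ∀ y y' : Y, H y y' ≤ c := by
    intro y y'
    rw [hH]
    calc c * Real.exp (-(ε * G.dist y y')) ≤ c * 1 := by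
          refine mul_le_mul_of_nonneg_left ?_ hcpos.le
          rw [Real.exp_le_one_iff]
          have : (0:ℝ) ≤ (G.dist y y' : ℝ) := Nat.cast_nonneg _
          nlinarith
      _ = c := mul_one c
  refine ⟨fun y y' => by rw [hH]; positivity, ?_, ?_, ?_, ?_⟩
  · -- row sums
    intro y
    have : ∑ y', H y y' = c * expDistSum G ε y := by
      rw [← row_sum G ε y, Finset.mul_sum]
      exact Finset.sum_congr rfl fun y' _ => hH y y'
    rw [this]
    have hS : expDistSum G ε y = expDistSum G ε y₀ := by
      rw [expDistSum, expDistSum]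
      exact Finset.sum_congr rfl fun d _ => by
        rw [nAtDist_indep G hconn hDR d y y₀]
    rw [hS, hcS]
  · -- DP
    intro z y y' hadj
    rw [hH, hH, ← mul_assoc, mul_comm (Real.exp ε) c, mul_assoc, ← Real.exp_add]
    refine mul_le_mul_of_nonneg_left ?_ hcpos.le
    apply Real.exp_le_exp.mpr
    have ht := hconn.dist_triangle (u := y') (v := y) (w := z)
    have h1 : G.dist y' y = 1 := SimpleGraph.dist_eq_one_iff_adj.mpr hadj.symm
    have : (G.dist y' z : ℝ) ≤ (G.dist y z : ℝ) + 1 := by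
      have : G.dist y' z ≤ G.dist y z + 1 := by omega
      exact_mod_cast this
    nlinarith
  · -- utility bound
    intro g
    have hN : (0:ℝ) < (Fintype.card Y : ℝ) := by
      exact_mod_cast Fintype.card_pos
    calc ∑ z, (1 / (Fintype.card Y : ℝ)) * H (g z) z
        ≤ ∑ _z : Y, (1 / (Fintype.card Y : ℝ)) * c := by
          refine Finset.sum_le_sum fun z _ => ?_
          exact mul_le_mul_of_nonneg_left (hHle (g z) z) (by positivity)
      _ = c := by
          rw [Finset.sum_const, nsmul_eq_mul, Finset.card_univ]
          field_simp
  · -- identity guess achieves c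
    have hdiag : ∀ z : Y, H z z = c := by
      intro z
      rw [hH, SimpleGraph.dist_self]
      simp
    calc ∑ z, (1 / (Fintype.card Y : ℝ)) * H z z
        = ∑ _z : Y, (1 / (Fintype.card Y : ℝ)) * c := by
          exact Finset.sum_congr rfl fun z _ => by rw [hdiag]
      _ = c := by
          rw [Finset.sum_const, nsmul_eq_mul, Finset.card_univ]
          have hN : (0:ℝ) < (Fintype.card Y : ℝ) := by exact_mod_cast Fintype.card_pos
          field_simp
end
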